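/- Fix δ with 0 < δ < ρ − L and suppose that in Algorithm niAPG every inexact proximal step satisfies the sufficient-decrease condition F(x_{k+1}) ≤ F(v_k) − (δ/2)·‖x_{k+1} − v_k‖² for all k ≥ 1. Then for every k ≥ 1: Δ_{k+q+1} ≤ Δ_k − (δ/2)·min_{t = k,…,k+q} ‖x_{t+1} − v_t‖². -/

import Mathlib

/-!
Whichever of `y_t`, `x_t` is chosen, `F (v_t) ≤ Δ_t`, so sufficient decrease gives
`F (x_{t+1}) ≤ Δ_t - (δ/2)‖x_{t+1} - v_t‖²`. In particular the new value never exceeds the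
window maximum, so `Δ` is nonincreasing. The window of `Δ_{k+q+1}` consists of the points
`x_{t+1}` with `k ≤ t ≤ k + q`, and its maximum, attained at one of them, is at most
`Δ_t - (δ/2)‖x_{t+1} - v_t‖² ≤ Δ_k - (δ/2)‖x_{t+1} - v_t‖²`.
-/

def IsWindowMax {α : Type*} [LinearOrder α] (q : ℕ) (a Δ : ℕ → α) : Prop :=
  ∀ k, ∀ hk : 1 ≤ k, Δ k =
    (Finset.Icc (max 1 (k - q)) k).sup' (Finset.nonempty_Icc.mpr (max_le hk (k.sub_le q))) a

namespace IsWindowMax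

section LinearOrder

variable {α : Type*} [LinearOrder α] {q : ℕ} {a Δ : ℕ → α}

theorem le_apply (hΔ : IsWindowMax q a Δ) {k t : ℕ}
    (ht : t ∈ Finset.Icc (max 1 (k - q)) k) : a t ≤ Δ k := by
  have hk : 1 ≤ k := by simp only [Finset.mem_Icc] at ht; omega
  rw [hΔ k hk]
  exact Finset.le_sup' a ht

theorem apply_le_self (hΔ : IsWindowMax q a Δ) {k : ℕ} (hk : 1 ≤ k) : a k ≤ Δ k :=
  hΔ.le_apply (by simp only [Finset.mem_Icc]; omega)

theorem succ_le (hΔ : IsWindowMax q a Δ) (hnext : ∀ t ≥ 1, a (t + 1) ≤ Δ t) {k : ℕ}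
    (hk : 1 ≤ k) : Δ (k + 1) ≤ Δ k := by
  rw [hΔ (k + 1) (by omega), Finset.sup'_le_iff]
  intro s hs
  rcases (Finset.mem_Icc.mp hs).2.eq_or_lt with rfl | hlt
  · exact hnext k hk
  · simp only [Finset.mem_Icc] at hs
    exact hΔ.le_apply (by simp only [Finset.mem_Icc]; omega)

theorem antitoneOn (hΔ : IsWindowMax q a Δ) (hnext : ∀ t ≥ 1, a (t + 1) ≤ Δ t) :
    AntitoneOn Δ (Set.Ici 1) :=
  antitoneOn_nat_Ici_of_succ_le fun _ hk => hΔ.succ_le hnext hk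

end LinearOrder

theorem exists_le_sub_of_apply_succ_le_sub {α : Type*} [AddCommGroup α] [LinearOrder α]
    [IsOrderedAddMonoid α] {q : ℕ} {a Δ c : ℕ → α} (hΔ : IsWindowMax q a Δ)
    (hc : ∀ t, 0 ≤ c t) (hstep : ∀ t ≥ 1, a (t + 1) ≤ Δ t - c t) {k : ℕ}
    (hk : 1 ≤ k) :
    ∃ t ∈ Finset.Icc k (k + q), Δ (k + q + 1) ≤ Δ k - c t := by
  have hanti := hΔ.antitoneOn fun t ht => (hstep t ht).trans (sub_le_self _ (hc t))
  obtain ⟨s, hs, hmax⟩ := Finset.exists_mem_eq_sup' (Finset.nonempty_Icc.mpr (by omega)) a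
    (s := Finset.Icc (max 1 (k + q + 1 - q)) (k + q + 1))
  simp only [Finset.mem_Icc] at hs
  obtain ⟨t, rfl⟩ : ∃ t, s = t + 1 := ⟨s - 1, by omega⟩
  refine ⟨t, Finset.mem_Icc.mpr ⟨by omega, by omega⟩, ?_⟩
  calc Δ (k + q + 1) = a (t + 1) := by rw [hΔ _ (by omega), hmax]
    _ ≤ Δ t - c t := hstep t (by omega)
    _ ≤ Δ k - c t := sub_le_sub_right (hanti (Set.mem_Ici.mpr hk)
        (Set.mem_Ici.mpr (by omega)) (by omega)) _

end IsWindowMax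

theorem niAPG_nonconvex_Delta_decrease
    {E : Type*} [NormedAddCommGroup E]
    (F : E → ℝ) (δ : ℝ)
    (hδ : 0 < δ)
    (q : ℕ) (x y v : ℕ → E) (Δ : ℕ → ℝ)
    (hΔ : ∀ k, ∀ hk : 1 ≤ k, Δ k =
      (Finset.Icc (max 1 (k - q)) k).sup' (Finset.nonempty_Icc.mpr (by omega))
        (fun t => F (x t)))
    (hv : ∀ k, 1 ≤ k → v k = if F (y k) ≤ Δ k then y k else x k)
    (hdec : ∀ k, 1 ≤ k →
      F (x (k + 1)) ≤ F (v k) - (δ / 2) * ‖x (k + 1) - v k‖ ^ 2) :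
    ∀ k, 1 ≤ k →
      Δ (k + q + 1) ≤ Δ k - (δ / 2) *
        (Finset.Icc k (k + q)).inf' (Finset.nonempty_Icc.mpr (by omega))
          (fun t => ‖x (t + 1) - v t‖ ^ 2) := by
  have hW : IsWindowMax q (fun t => F (x t)) Δ := hΔ
  have hFv : ∀ t ≥ 1, F (v t) ≤ Δ t := fun t ht => by
    rw [hv t ht]
    split_ifs with h
    exacts [h, hW.apply_le_self ht]
  intro k hk
  obtain ⟨t, ht, hdrop⟩ := hW.exists_le_sub_of_apply_succ_le_sub
    (c := fun t => δ / 2 * ‖x (t + 1) - v t‖ ^ 2) (fun _ => by positivity)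
    (fun t ht => (hdec t ht).trans (sub_le_sub_right (hFv t ht) _)) hk
  calc Δ (k + q + 1) ≤ Δ k - δ / 2 * ‖x (t + 1) - v t‖ ^ 2 := hdrop
    _ ≤ _ := by
      gcongr
      exact Finset.inf'_le _ ht
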